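/- arXiv:2012.02522 — 5 statements merged into one kernel-verified Lean document; each statement's English description precedes it below -/
import Mathlib

section
/- Let H be a real Hilbert space, f : H → ℝ convex and differentiable, Ψ : H → ℝ ∪ {+∞} convex, proper and lower semicontinuous, F = f + Ψ with optimal value F* attained on a nonempty solution set Ω. Let A be a self-adjoint positive-semidefinite bounded linear operator on H, and suppose F satisfies the sharpness condition with parameters ζ > 0, ξ > 0, θ ∈ [0,1]. Then for every point x with F(x) − F* ≤ ξ and every λ ∈ [0,1], the optimal value of the subproblem satisfies min_p Q_A(p; x) ≤ −λ (F(x) − F*) + (λ² ‖A‖ / (2ζ²)) (F(x) − F*)^{2θ}. -/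
/-!
Step from `x` a fraction `λ` of the way towards a point `y ∈ Ω`. Convexity of `f` (through its
gradient inequality) and of `Ψ` bound the linear and `Ψ` parts of the model by
`λ (F y - F x) = -λ δ`, and the quadratic part is at most `λ² ‖A‖ ‖y - x‖² / 2`. Letting `y` run
over nearly closest points of `Ω` replaces `‖y - x‖` by `dist(x, Ω)`, which sharpness bounds by
`δ^θ / ζ`.
-/

open Metric Filter

/-- The regularized objective `F = f + Ψ` (with `Ψ` extended-real-valued). -/
noncomputable def objF {H : Type*} [NormedAddCommGroup H] [InnerProductSpace ℝ H]
    (f : H → ℝ) (Ψ : H → EReal) (x : H) : EReal := (f x : EReal) + Ψ x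

/-- The subproblem model `Q_A(p; x) = ⟨∇f(x), p⟩ + (1/2)⟨p, A p⟩ + Ψ(x + p) − Ψ(x)`. -/
noncomputable def modelQ {H : Type*} [NormedAddCommGroup H] [InnerProductSpace ℝ H]
    (f' : H → H) (Ψ : H → EReal) (A : H →L[ℝ] H) (x p : H) : EReal :=
  (((inner ℝ (f' x) p : ℝ) + (1 / 2) * (inner ℝ p (A p) : ℝ) : ℝ) : EReal) + Ψ (x + p) - Ψ x

/-- Convexity for an extended-real-valued function. -/
def ConvexEReal {H : Type*} [NormedAddCommGroup H] [InnerProductSpace ℝ H]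
    (Ψ : H → EReal) : Prop :=
  ∀ x y : H, ∀ a b : ℝ, 0 ≤ a → 0 ≤ b → a + b = 1 →
    Ψ (a • x + b • y) ≤ (a : EReal) * Ψ x + (b : EReal) * Ψ y

/-- Properness: `Ψ` never takes the value `−∞` and is finite somewhere
(i.e. `Ψ : H → ℝ ∪ {+∞}` is proper). -/
def ProperEReal {H : Type*} (Ψ : H → EReal) : Prop :=
  (∀ x, Ψ x ≠ ⊥) ∧ (∃ x, Ψ x ≠ ⊤)

open Topology

theorem ConvexOn.inner_gradient_le_sub {H : Type*} [NormedAddCommGroup H] [InnerProductSpace ℝ H]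
    [CompleteSpace H] {f : H → ℝ} (hf : ConvexOn ℝ Set.univ f) {g x : H}
    (hg : HasGradientAt f g x) (y : H) : inner ℝ g (y - x) ≤ f y - f x := by
  set ℓ : ℝ →ᵃ[ℝ] H := AffineMap.lineMap x y
  have hline : ConvexOn ℝ Set.univ (f ∘ ℓ) := hf.comp_affineMap ℓ
  have hderiv : HasDerivAt (f ∘ ℓ) (inner ℝ g (y - x)) 0 := by
    have hfd : HasFDerivAt f (InnerProductSpace.toDual ℝ H g) (ℓ 0) := by
      simpa [ℓ] using hg.hasFDerivAt
    simpa using hfd.comp_hasDerivAt (0 : ℝ) AffineMap.hasDerivAt_lineMap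
  simpa [slope_def_field, ℓ] using
    hline.le_slope_of_hasDerivAt (Set.mem_univ 0) (Set.mem_univ 1) one_pos hderiv

theorem EReal.eq_coe_sub_of_coe_add_eq_coe {a c : ℝ} {b : EReal} (h : (a : EReal) + b = c) :
    b = ((c - a : ℝ) : EReal) := by
  induction b using EReal.rec with
  | bot => simp at h
  | top => simp at h
  | coe b =>
    norm_cast at h ⊢
    linarith

/-- The infimum of `dist x y` over `y ∈ s` need not be attained, so the bound is passed to
`infDist x s` through a limit from above. -/
theorem le_coe_comp_infDist_of_forall_mem {α : Type*} [PseudoMetricSpace α] {x : α} {s : Set α}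
    (hs : s.Nonempty) {g : ℝ → ℝ} (hg : Continuous g) (hg_mono : MonotoneOn g (Set.Ici 0))
    {a : EReal} (h : ∀ y ∈ s, a ≤ g (dist x y)) : a ≤ g (infDist x s) := by
  have hlim : Tendsto (fun η => ((g (infDist x s + η) : ℝ) : EReal)) (𝓝[>] 0)
      (𝓝 (g (infDist x s))) := by
    have : Continuous fun η => ((g (infDist x s + η) : ℝ) : EReal) :=
      continuous_coe_real_ereal.comp (hg.comp (continuous_const.add continuous_id))
    simpa using (this.tendsto 0).mono_left nhdsWithin_le_nhds
  refine ge_of_tendsto hlim ?_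
  filter_upwards [self_mem_nhdsWithin] with η (hη : 0 < η)
  obtain ⟨y, hy, hxy⟩ := (infDist_lt_iff hs).mp (lt_add_of_pos_right (infDist x s) hη)
  exact (h y hy).trans <| EReal.coe_le_coe_iff.mpr <|
    hg_mono dist_nonneg (add_nonneg infDist_nonneg hη.le) hxy.le

theorem inner_apply_self_le_opNorm_mul_sq {H : Type*} [NormedAddCommGroup H]
    [InnerProductSpace ℝ H] (A : H →L[ℝ] H) (v : H) : inner ℝ v (A v) ≤ ‖A‖ * ‖v‖ ^ 2 :=
  calc inner ℝ v (A v) ≤ ‖v‖ * ‖A v‖ := real_inner_le_norm _ _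
    _ ≤ ‖v‖ * (‖A‖ * ‖v‖) := mul_le_mul_of_nonneg_left (A.le_opNorm v) (norm_nonneg _)
    _ = ‖A‖ * ‖v‖ ^ 2 := by ring

theorem modelQ_smul_sub_le {H : Type*} [NormedAddCommGroup H] [InnerProductSpace ℝ H]
    [CompleteSpace H] {f : H → ℝ} {f' : H → H} {Ψ : H → EReal} {x y : H}
    (hf_conv : ConvexOn ℝ Set.univ f) (hf_diff : HasGradientAt f (f' x) x)
    (hΨ_conv : ConvexEReal Ψ) (A : H →L[ℝ] H) {a b : ℝ}
    (hx : objF f Ψ x = a) (hy : objF f Ψ y = b) {lam : ℝ} (hlam0 : 0 ≤ lam) (hlam1 : lam ≤ 1) :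
    modelQ f' Ψ A x (lam • (y - x)) ≤
      ((lam * (b - a) + lam ^ 2 * ‖A‖ / 2 * ‖y - x‖ ^ 2 : ℝ) : EReal) := by
  have hΨx := EReal.eq_coe_sub_of_coe_add_eq_coe hx
  have hΨy := EReal.eq_coe_sub_of_coe_add_eq_coe hy
  have hΨstep :
      Ψ (x + lam • (y - x)) ≤ (((1 - lam) * (a - f x) + lam * (b - f y) : ℝ) : EReal) := by
    have h := hΨ_conv x y (1 - lam) lam (by linarith) hlam0 (by ring)
    rwa [show (1 - lam) • x + lam • y = x + lam • (y - x) by module, hΨx, hΨy,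
      ← EReal.coe_mul, ← EReal.coe_mul, ← EReal.coe_add] at h
  have hgrad := hf_conv.inner_gradient_le_sub hf_diff y
  have hquad := inner_apply_self_le_opNorm_mul_sq A (y - x)
  unfold modelQ
  rw [hΨx]
  refine (EReal.sub_le_sub (add_le_add_right hΨstep _) le_rfl).trans ?_
  norm_cast
  rw [real_inner_smul_right, map_smul, real_inner_smul_left, real_inner_smul_right]
  linarith [mul_le_mul_of_nonneg_left hgrad hlam0,
    mul_le_mul_of_nonneg_left hquad (sq_nonneg lam)]

theorem statement0_general
    {H : Type*} [NormedAddCommGroup H] [InnerProductSpace ℝ H] [CompleteSpace H]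
    (f : H → ℝ) (f' : H → H) (Ψ : H → EReal) (Ω : Set H) (Fstar : ℝ)
    (A : H →L[ℝ] H) (ζ ξ θ : ℝ)
    -- f convex and differentiable with gradient f'
    (hf_conv : ConvexOn ℝ Set.univ f)
    (hf_diff : ∀ x : H, HasGradientAt f (f' x) x)
    -- Ψ convex, proper, lower semicontinuous
    (hΨ_conv : ConvexEReal Ψ)
    -- F* attained on the nonempty solution set Ω
    (hΩ_ne : Ω.Nonempty)
    (hΩ : ∀ y : H, y ∈ Ω ↔ objF f Ψ y = (Fstar : EReal))
    (hFstar_lb : ∀ y : H, (Fstar : EReal) ≤ objF f Ψ y)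
    -- sharpness condition with parameters ζ > 0, ξ > 0, θ ∈ [0,1]
    (hζ : 0 < ζ)
    (hsharp : ∀ y : H, ∀ d : ℝ, objF f Ψ y = ((Fstar + d : ℝ) : EReal) → d ≤ ξ →
      ζ * infDist y Ω ≤ d ^ θ) :
    ∀ x : H, ∀ δ : ℝ, objF f Ψ x = ((Fstar + δ : ℝ) : EReal) → δ ≤ ξ →
      ∀ lam : ℝ, 0 ≤ lam → lam ≤ 1 →
        (⨅ p : H, modelQ f' Ψ A x p) ≤
          ((-lam * δ + lam ^ 2 * ‖A‖ / (2 * ζ ^ 2) * δ ^ (2 * θ) : ℝ) : EReal) := by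
  intro x δ hx hδξ lam hlam0 hlam1
  have hδ : 0 ≤ δ := by
    have h := hFstar_lb x
    rw [hx, EReal.coe_le_coe_iff] at h
    linarith
  have hdist : infDist x Ω ≤ δ ^ θ / ζ := by
    rw [le_div_iff₀ hζ, mul_comm]
    exact hsharp x δ hx hδξ
  set g : ℝ → ℝ := fun t => -lam * δ + lam ^ 2 * ‖A‖ / 2 * t ^ 2
  have hg_mono : MonotoneOn g (Set.Ici 0) := fun s _ t _ hst => by
    simp only [g]
    gcongr
  have hstep : ∀ y ∈ Ω, (⨅ p : H, modelQ f' Ψ A x p) ≤ g (dist x y) := fun y hy =>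
    (iInf_le _ _).trans <| (modelQ_smul_sub_le hf_conv (hf_diff x) hΨ_conv A hx
      ((hΩ y).mp hy) hlam0 hlam1).trans_eq <| by
        rw [dist_eq_norm']; congr 1; simp only [g]; ring
  calc (⨅ p : H, modelQ f' Ψ A x p) ≤ g (infDist x Ω) :=
        le_coe_comp_infDist_of_forall_mem hΩ_ne (by fun_prop) hg_mono hstep
    _ ≤ g (δ ^ θ / ζ) := EReal.coe_le_coe_iff.mpr (hg_mono infDist_nonneg
        (infDist_nonneg.trans hdist) hdist)
    _ = _ := by
      rw [show (2 : ℝ) * θ = θ * 2 by ring, Real.rpow_mul hδ, Real.rpow_two]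
      congr 1
      simp only [g]
      field_simp

/-- under the sharpness condition with parameters `ζ, ξ, θ`, for any `x` in the
level set and any `λ ∈ [0,1]`, the optimal value of the subproblem satisfies
`min_p Q_A(p; x) ≤ −λ (F(x) − F*) + (λ² ‖A‖ / (2ζ²)) (F(x) − F*)^{2θ}`. -/
theorem statement0
    {H : Type*} [NormedAddCommGroup H] [InnerProductSpace ℝ H] [CompleteSpace H]
    (f : H → ℝ) (f' : H → H) (Ψ : H → EReal) (Ω : Set H) (Fstar : ℝ)
    (A : H →L[ℝ] H) (ζ ξ θ : ℝ)
    -- f convex and differentiable with gradient f'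
    (hf_conv : ConvexOn ℝ Set.univ f)
    (hf_diff : ∀ x : H, HasGradientAt f (f' x) x)
    -- Ψ convex, proper, lower semicontinuous
    (hΨ_conv : ConvexEReal Ψ)
    (hΨ_proper : ProperEReal Ψ)
    (hΨ_lsc : LowerSemicontinuous Ψ)
    -- F* attained on the nonempty solution set Ω
    (hΩ_ne : Ω.Nonempty)
    (hΩ : ∀ y : H, y ∈ Ω ↔ objF f Ψ y = (Fstar : EReal))
    (hFstar_lb : ∀ y : H, (Fstar : EReal) ≤ objF f Ψ y)
    -- A self-adjoint positive semidefinite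
    (hA_sa : ∀ u v : H, (inner ℝ (A u) v : ℝ) = (inner ℝ u (A v) : ℝ))
    (hA_psd : ∀ u : H, (0 : ℝ) ≤ (inner ℝ u (A u) : ℝ))
    -- sharpness condition with parameters ζ > 0, ξ > 0, θ ∈ [0,1]
    (hζ : 0 < ζ) (hξ : 0 < ξ) (hθ0 : 0 ≤ θ) (hθ1 : θ ≤ 1)
    (hsharp : ∀ y : H, ∀ d : ℝ, objF f Ψ y = ((Fstar + d : ℝ) : EReal) → d ≤ ξ →
      ζ * infDist y Ω ≤ d ^ θ) :
    ∀ x : H, ∀ δ : ℝ, objF f Ψ x = ((Fstar + δ : ℝ) : EReal) → δ ≤ ξ →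
      ∀ lam : ℝ, 0 ≤ lam → lam ≤ 1 →
        (⨅ p : H, modelQ f' Ψ A x p) ≤
          ((-lam * δ + lam ^ 2 * ‖A‖ / (2 * ζ ^ 2) * δ ^ (2 * θ) : ℝ) : EReal) :=
  statement0_general f f' Ψ Ω Fstar A ζ ξ θ hf_conv hf_diff hΨ_conv hΩ_ne hΩ hFstar_lb hζ hsharp
end

section
/- (Linear convergence for θ ∈ (1/2, 1].) Let H be a real Hilbert space, f : H → ℝ convex and differentiable, Ψ : H → ℝ ∪ {+∞} convex, proper and lower semicontinuous, F = f + Ψ with optimal value F* attained on a nonempty solution set Ω. Suppose F satisfies the sharpness condition with parameters ζ > 0, ξ > 0 and θ ∈ (1/2, 1]. Let sequences x^t, H_t, p^t, α_t be given with x^0 satisfying F(x^0) − F* ≤ ξ, x^{t+1} = x^t + α_t p^t, M ⪰ H_t ⪰ m > 0 for all t, each p^t satisfying the multiplicative inexactness condition with parameter η ∈ [0,1) for Q_{H_t}(·; x^t), and each α_t ∈ (0,1] satisfying the Armijo condition with parameter γ ∈ (0,1). Write δ_t = F(x^t) − F*. Then: (i) whenever δ_t > (ζ²/M)^{1/(2θ−1)},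 one has δ_{t+1} ≤ δ_t (1 − (1 − η) α_t γ ζ² ξ^{1−2θ} / (2M)); (ii) if t₀ is the first index at which δ_{t₀} ≤ (ζ²/M)^{1/(2θ−1)}, then for every t ≥ t₀, δ_{t+1} ≤ δ_t (1 − (1 − η) α_t γ / 2). -/
/-!
By the Armijo and inexactness conditions each step lowers the gap by at least
`(1 - η) α_t γ |Q*_t|`. The model value `Q*_t` is finite because `Ψ` has a continuous affine
minorant (separate a point below its closed convex epigraph) and `H_t ⪰ m > 0`. Testing the
model along the segment from `x^t` towards a point of `Ω` at almost minimal distance, convexity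
of `f` and `Ψ` gives `Q*_t ≤ -λ δ_t + (M/2) λ² dist(x^t, Ω)²` for `λ ∈ (0, 1]`, and sharpness
bounds the distance by `δ_t^θ / ζ`. The minimising `λ = ζ² δ_t^(1-2θ) / M` is admissible
above the threshold; below it `λ = 1` already gives `Q*_t ≤ -δ_t / 2`.
-/
open Metric Filter

open Topology

theorem EReal.eq_coe_sub_of_coe_add_eq {r s : ℝ} {v : EReal} (h : (r : EReal) + v = s) :
    v = ((s - r : ℝ) : EReal) := by
  induction v using EReal.rec with
  | bot => simp at h
  | coe t =>
    rw [← EReal.coe_add, EReal.coe_eq_coe_iff] at h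
    rw [EReal.coe_eq_coe_iff]; linarith
  | top => simp at h

theorem LowerSemicontinuous.isClosed_realEpigraph {α : Type*} [TopologicalSpace α]
    {Ψ : α → EReal} (hΨ : LowerSemicontinuous Ψ) :
    IsClosed {z : α × ℝ | Ψ z.1 ≤ z.2} :=
  (lowerSemicontinuous_iff_isClosed_epigraph.1 hΨ).preimage
    (continuous_fst.prodMk (continuous_coe_real_ereal.comp continuous_snd))

theorem ConvexEReal.convex_realEpigraph {H : Type*} [NormedAddCommGroup H]
    [InnerProductSpace ℝ H] {Ψ : H → EReal} (hΨ : ConvexEReal Ψ) :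
    Convex ℝ {z : H × ℝ | Ψ z.1 ≤ z.2} := by
  rintro z (hz : Ψ z.1 ≤ z.2) w (hw : Ψ w.1 ≤ w.2) a b ha hb hab
  calc Ψ (a • z.1 + b • w.1) ≤ (a : EReal) * Ψ z.1 + (b : EReal) * Ψ w.1 :=
        hΨ z.1 w.1 a b ha hb hab
    _ ≤ (a : EReal) * z.2 + (b : EReal) * w.2 := by gcongr
    _ = ((a • z + b • w).2 : ℝ) := by simp

theorem ConvexEReal.exists_affine_minorant {H : Type*} [NormedAddCommGroup H]
    [InnerProductSpace ℝ H] {Ψ : H → EReal} (hconv : ConvexEReal Ψ) (hproper : ProperEReal Ψ)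
    (hlsc : LowerSemicontinuous Ψ) :
    ∃ (L : H →L[ℝ] ℝ) (b : ℝ), ∀ y, ((L y + b : ℝ) : EReal) ≤ Ψ y := by
  obtain ⟨hbot, x₀, hx₀⟩ := hproper
  set S := {z : H × ℝ | Ψ z.1 ≤ z.2}
  set c := (Ψ x₀).toReal
  have hc : Ψ x₀ = c := (EReal.coe_toReal hx₀ (hbot _)).symm
  have hnot : (x₀, c - 1) ∉ S := by
    simp only [S, Set.mem_ofPred_eq, hc, not_le, EReal.coe_lt_coe_iff]
    linarith
  obtain ⟨φ, u, hφ_lt, hφ_gt⟩ :=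
    geometric_hahn_banach_point_closed hconv.convex_realEpigraph hlsc.isClosed_realEpigraph hnot
  set β := φ (0, 1)
  have hφ_apply : ∀ y r, φ (y, r) = φ (y, 0) + r * β := fun y r => by
    rw [← smul_eq_mul, ← map_smul, ← map_add]; simp
  have hβ : 0 < β := by
    have := hφ_gt (x₀, c) (by simp [hc])
    rw [hφ_apply] at hφ_lt this
    linarith
  refine ⟨-β⁻¹ • φ.comp (ContinuousLinearMap.inl ℝ H ℝ), u / β, fun y => ?_⟩
  by_cases hy : Ψ y = ⊤
  · simp [hy]
  have hr : Ψ y = (Ψ y).toReal := (EReal.coe_toReal hy (hbot _)).symm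
  have hsep := hφ_gt (y, (Ψ y).toReal) (by simp [← hr])
  rw [hφ_apply] at hsep
  rw [hr, EReal.coe_le_coe_iff]
  simp only [FunLike.coe_smul, Pi.smul_apply, ContinuousLinearMap.comp_apply,
    ContinuousLinearMap.inl_apply, smul_eq_mul, neg_mul, inv_mul_eq_div]
  rw [← sub_eq_neg_add, ← sub_div, div_le_iff₀ hβ]
  linarith

open AffineMap in
theorem ConvexOn.inner_gradient_sub_le {H : Type*} [NormedAddCommGroup H] [InnerProductSpace ℝ H]
    [CompleteSpace H] {f : H → ℝ} {g : H} {x : H} (hf : ConvexOn ℝ Set.univ f)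
    (hg : HasGradientAt f g x) (z : H) :
    inner ℝ g (z - x) ≤ f z - f x := by
  have hline : HasDerivAt (f ∘ lineMap (k := ℝ) x z) (inner ℝ g (z - x)) 0 := by
    have hF := hasGradientAt_iff_hasFDerivAt.1 hg
    rw [← lineMap_apply_zero (k := ℝ) x z] at hF
    simpa using hF.comp_hasDerivAt (0 : ℝ) hasDerivAt_lineMap
  simpa [slope_def_field] using (hf.comp_affineMap (lineMap x z)).le_slope_of_hasDerivAt
    trivial trivial zero_lt_one hline

theorem Metric.le_comp_infDist {α : Type*} [PseudoMetricSpace α] {s : Set α} (hs : s.Nonempty)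
    {x : α} {g : ℝ → ℝ} {c : ℝ} (hg : ContinuousAt g (infDist x s))
    (hmono : MonotoneOn g (Set.Ici 0)) (h : ∀ w ∈ s, c ≤ g (dist x w)) :
    c ≤ g (infDist x s) := by
  have hg' : Tendsto g (𝓝[>] (infDist x s)) (𝓝 (g (infDist x s))) :=
    hg.tendsto.mono_left nhdsWithin_le_nhds
  refine ge_of_tendsto hg' ?_
  filter_upwards [self_mem_nhdsWithin] with d (hd : infDist x s < d)
  obtain ⟨w, hw, hwd⟩ := (infDist_lt_iff hs).1 hd
  exact (h w hw).trans (hmono dist_nonneg (infDist_nonneg.trans hd.le) hwd.le)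

theorem Real.rpow_eq_mul_rpow_sub_one {x y : ℝ} (hx : 0 ≤ x) (hy : y ≠ 0) :
    x ^ y = x * x ^ (y - 1) := by
  rw [← Real.rpow_one_add' hx (by simpa using hy), add_sub_cancel]

theorem le_neg_mul_of_threshold_lt {Q δ ξ ζ M θ : ℝ} (hM : 0 < M) (hζ : 0 < ζ) (hθ : 1 / 2 < θ)
    (hδξ : δ ≤ ξ) (hK : (ζ ^ 2 / M) ^ (1 / (2 * θ - 1)) < δ)
    (hQ : ∀ lam, 0 < lam → lam ≤ 1 → Q ≤ -lam * δ + M / (2 * ζ ^ 2) * lam ^ 2 * δ ^ (2 * θ)) :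
    Q ≤ -(ζ ^ 2 * ξ ^ (1 - 2 * θ) / (2 * M)) * δ := by
  have hδ : 0 < δ := (Real.rpow_nonneg (by positivity) _).trans_lt hK
  set s := δ ^ (2 * θ - 1)
  have hδs : δ ^ (2 * θ) = δ * s := Real.rpow_eq_mul_rpow_sub_one hδ.le (by linarith : (0 : ℝ) < 2 * θ).ne'
  have hs : ζ ^ 2 / M < s := by
    rwa [one_div, Real.rpow_inv_lt_iff_of_pos (by positivity) hδ.le (by linarith)] at hK
  have hs0 : 0 < s := (by positivity : (0 : ℝ) < ζ ^ 2 / M).trans hs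
  -- the minimiser of the right-hand side of `hQ` over `lam`
  set lam := ζ ^ 2 / (M * s)
  have hlam : lam ≤ 1 := by
    rw [div_le_one (by positivity)]
    rw [div_lt_iff₀ hM] at hs
    linarith
  have hξs : ξ ^ (1 - 2 * θ) ≤ s⁻¹ := by
    rw [← Real.rpow_neg hδ.le, neg_sub]
    exact Real.rpow_le_rpow_of_nonpos hδ hδξ (by linarith)
  calc Q ≤ -lam * δ + M / (2 * ζ ^ 2) * lam ^ 2 * δ ^ (2 * θ) := hQ lam (by positivity) hlam
    _ = -(ζ ^ 2 * s⁻¹ / (2 * M)) * δ := by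
        rw [hδs]
        simp only [lam]
        field_simp
        ring
    _ ≤ -(ζ ^ 2 * ξ ^ (1 - 2 * θ) / (2 * M)) * δ := by gcongr

theorem le_neg_half_mul_of_le_threshold {Q δ ζ M θ : ℝ} (hM : 0 < M) (hζ : 0 < ζ)
    (hθ : 1 / 2 < θ) (hδ : 0 ≤ δ) (hK : δ ≤ (ζ ^ 2 / M) ^ (1 / (2 * θ - 1)))
    (hQ : ∀ lam, 0 < lam → lam ≤ 1 → Q ≤ -lam * δ + M / (2 * ζ ^ 2) * lam ^ 2 * δ ^ (2 * θ)) :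
    Q ≤ -(1 / 2) * δ := by
  have hs : δ ^ (2 * θ - 1) ≤ ζ ^ 2 / M := by
    rwa [one_div, Real.le_rpow_inv_iff_of_pos hδ (by positivity) (by linarith)] at hK
  calc Q ≤ -1 * δ + M / (2 * ζ ^ 2) * 1 ^ 2 * (δ * δ ^ (2 * θ - 1)) := by
        rw [← Real.rpow_eq_mul_rpow_sub_one hδ (by linarith : (0 : ℝ) < 2 * θ).ne']
        exact hQ 1 one_pos le_rfl
    _ ≤ -1 * δ + M / (2 * ζ ^ 2) * 1 ^ 2 * (δ * (ζ ^ 2 / M)) := by gcongr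
    _ = -(1 / 2) * δ := by field_simp; ring

theorem le_mul_one_sub_of_le_add_mul {δ δ' κ Q c : ℝ} (hκ : 0 ≤ κ) (h : δ' ≤ δ + κ * Q)
    (hQ : Q ≤ -c * δ) : δ' ≤ δ * (1 - κ * c) := by
  nlinarith [mul_le_mul_of_nonneg_left hQ hκ]

section Model

variable {H : Type*} [NormedAddCommGroup H] [InnerProductSpace ℝ H] {f' : H → H}
  {Ψ : H → EReal} {A : H →L[ℝ] H} {x : H} {r : ℝ}

theorem modelQ_eq_of_eq_coe (hx : Ψ x = r) (p : H) :
    modelQ f' Ψ A x p =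
      ((inner ℝ (f' x) p + 1 / 2 * inner ℝ p (A p) - r : ℝ) : EReal) + Ψ (x + p) := by
  rw [modelQ, hx, sub_eq_add_neg, add_right_comm, EReal.coe_sub, sub_eq_add_neg]

theorem modelQ_zero (hx : Ψ x = r) : modelQ f' Ψ A x 0 = 0 := by
  rw [modelQ_eq_of_eq_coe hx, add_zero, hx, ← EReal.coe_add]
  simp

theorem exists_coe_le_modelQ {m : ℝ} (hm : 0 < m) (hA : ∀ u, m * ‖u‖ ^ 2 ≤ inner ℝ u (A u))
    {L : H →L[ℝ] ℝ} {b : ℝ} (hL : ∀ y, ((L y + b : ℝ) : EReal) ≤ Ψ y) (hx : Ψ x = r) :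
    ∃ C : ℝ, ∀ p, (C : EReal) ≤ modelQ f' Ψ A x p := by
  set k := ‖f' x‖ + ‖L‖
  refine ⟨-k ^ 2 / (2 * m) + (L x + b - r), fun p => ?_⟩
  rw [modelQ_eq_of_eq_coe hx]
  refine le_trans ?_ (add_le_add_right (hL (x + p)) _)
  rw [← EReal.coe_add, EReal.coe_le_coe_iff, map_add]
  have hg : -(‖f' x‖ * ‖p‖) ≤ inner ℝ (f' x) p := neg_le_of_abs_le (abs_real_inner_le_norm _ _)
  have hLp : -(‖L‖ * ‖p‖) ≤ L p := neg_le_of_abs_le (L.le_opNorm p)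
  -- completing the square in `‖p‖`
  have hsq : -k ^ 2 / (2 * m) ≤ -(k * ‖p‖) + m / 2 * ‖p‖ ^ 2 := by
    rw [div_le_iff₀ (by positivity)]
    nlinarith [sq_nonneg (m * ‖p‖ - k)]
  nlinarith [hA p]

theorem exists_iInf_modelQ_eq_coe {m : ℝ} (hm : 0 < m)
    (hA : ∀ u, m * ‖u‖ ^ 2 ≤ inner ℝ u (A u)) {L : H →L[ℝ] ℝ} {b : ℝ}
    (hL : ∀ y, ((L y + b : ℝ) : EReal) ≤ Ψ y) (hx : Ψ x = r) :
    ∃ Q : ℝ, ⨅ q, modelQ f' Ψ A x q = Q ∧ Q ≤ 0 := by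
  obtain ⟨C, hC⟩ := exists_coe_le_modelQ hm hA hL hx
  have hle : ⨅ q, modelQ f' Ψ A x q ≤ 0 := (iInf_le _ 0).trans (modelQ_zero hx).le
  have hge : C ≤ ⨅ q, modelQ f' Ψ A x q := le_iInf hC
  have hfin : ⨅ q, modelQ f' Ψ A x q = (⨅ q, modelQ f' Ψ A x q).toReal :=
    (EReal.coe_toReal (hle.trans_lt EReal.zero_lt_top).ne
      (lt_of_lt_of_le (EReal.bot_lt_coe _) hge).ne').symm
  refine ⟨_, hfin, ?_⟩
  rwa [hfin, ← EReal.coe_zero, EReal.coe_le_coe_iff] at hle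

theorem modelQ_le_of_inexact {η Q : ℝ} {p : H} (hQ : ⨅ q, modelQ f' Ψ A x q = Q)
    (hinexact : modelQ f' Ψ A x p - (⨅ q, modelQ f' Ψ A x q) ≤
      (η : EReal) * -(⨅ q, modelQ f' Ψ A x q)) :
    modelQ f' Ψ A x p ≤ ((1 - η) * Q : ℝ) := by
  rw [hQ, EReal.sub_le_iff_le_add (.inl (EReal.coe_ne_bot _)) (.inl (EReal.coe_ne_top _))]
    at hinexact
  refine hinexact.trans_eq ?_
  rw [← EReal.coe_neg, ← EReal.coe_mul, ← EReal.coe_add, EReal.coe_eq_coe_iff]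
  ring

theorem objF_add_smul_le_of_inexact {f : H → ℝ} {p : H} {α γ η Q v : ℝ}
    (hQ : ⨅ q, modelQ f' Ψ A x q = Q)
    (hinexact : modelQ f' Ψ A x p - (⨅ q, modelQ f' Ψ A x q) ≤
      (η : EReal) * -(⨅ q, modelQ f' Ψ A x q))
    (harmijo : objF f Ψ (x + α • p) ≤
      objF f Ψ x + ((γ * α : ℝ) : EReal) * modelQ f' Ψ A x p)
    (hγα : 0 ≤ γ * α) (hx : objF f Ψ x = v) :
    objF f Ψ (x + α • p) ≤ ((v + (1 - η) * α * γ * Q : ℝ) : EReal) := by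
  refine harmijo.trans ?_
  rw [hx]
  calc (v : EReal) + ((γ * α : ℝ) : EReal) * modelQ f' Ψ A x p
      ≤ v + ((γ * α : ℝ) : EReal) * ((1 - η) * Q : ℝ) := by
        gcongr
        exact modelQ_le_of_inexact hQ hinexact
    _ = ((v + (1 - η) * α * γ * Q : ℝ) : EReal) := by
        rw [← EReal.coe_mul, ← EReal.coe_add, EReal.coe_eq_coe_iff]
        ring

theorem modelQ_smul_sub_le_s3 [CompleteSpace H] {f : H → ℝ} {M lam s : ℝ} {w : H}
    (hf : ConvexOn ℝ Set.univ f) (hf' : HasGradientAt f (f' x) x) (hΨ : ConvexEReal Ψ)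
    (hA : ∀ u, inner ℝ u (A u) ≤ M * ‖u‖ ^ 2) (hx : Ψ x = r) (hw : Ψ w = s)
    (hl0 : 0 ≤ lam) (hl1 : lam ≤ 1) :
    modelQ f' Ψ A x (lam • (w - x)) ≤
      ((lam * (f w + s - (f x + r)) + M / 2 * lam ^ 2 * ‖w - x‖ ^ 2 : ℝ) : EReal) := by
  have hΨ_seg : Ψ (x + lam • (w - x)) ≤ ((1 - lam) * r + lam * s : ℝ) := by
    calc Ψ (x + lam • (w - x)) = Ψ ((1 - lam) • x + lam • w) := by congr 1; module
      _ ≤ ((1 - lam : ℝ) : EReal) * Ψ x + (lam : EReal) * Ψ w :=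
        hΨ x w _ _ (by linarith) hl0 (by ring)
      _ = ((1 - lam) * r + lam * s : ℝ) := by rw [hx, hw]; norm_cast
  have hlin : inner ℝ (f' x) (lam • (w - x)) ≤ lam * (f w - f x) := by
    rw [real_inner_smul_right]
    exact mul_le_mul_of_nonneg_left (hf.inner_gradient_sub_le hf' w) hl0
  have hquad : inner ℝ (lam • (w - x)) (A (lam • (w - x))) ≤ M * lam ^ 2 * ‖w - x‖ ^ 2 := by
    refine (hA _).trans_eq ?_
    rw [norm_smul, Real.norm_eq_abs, abs_of_nonneg hl0]
    ring
  rw [modelQ_eq_of_eq_coe hx]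
  refine (add_le_add_right hΨ_seg _).trans ?_
  rw [← EReal.coe_add, EReal.coe_le_coe_iff]
  linarith

theorem iInf_modelQ_le_of_sharp [CompleteSpace H] {f : H → ℝ} {Ω : Set H}
    {Fstar δ ζ θ M Q lam : ℝ}
    (hf : ConvexOn ℝ Set.univ f) (hf' : HasGradientAt f (f' x) x) (hΨ : ConvexEReal Ψ)
    (hA : ∀ u, inner ℝ u (A u) ≤ M * ‖u‖ ^ 2) (hM : 0 ≤ M) (hζ : 0 < ζ)
    (hΩ_ne : Ω.Nonempty) (hΩ : ∀ w ∈ Ω, objF f Ψ w = Fstar)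
    (hx : objF f Ψ x = (Fstar + δ : ℝ)) (hδ : 0 ≤ δ) (hsharp : ζ * infDist x Ω ≤ δ ^ θ)
    (hQ : ⨅ q, modelQ f' Ψ A x q = Q) (hl0 : 0 ≤ lam) (hl1 : lam ≤ 1) :
    Q ≤ -lam * δ + M / (2 * ζ ^ 2) * lam ^ 2 * δ ^ (2 * θ) := by
  have hΨx := EReal.eq_coe_sub_of_coe_add_eq hx
  have hdist : Q ≤ -lam * δ + M / 2 * lam ^ 2 * infDist x Ω ^ 2 := by
    refine Metric.le_comp_infDist (g := fun d => -lam * δ + M / 2 * lam ^ 2 * d ^ 2) hΩ_ne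
      (by fun_prop)
      (fun a ha b _ hab => by have : (0 : ℝ) ≤ a := ha; dsimp only; gcongr) fun w hw => ?_
    have hbound := modelQ_smul_sub_le_s3 hf hf' hΨ hA hΨx
      (EReal.eq_coe_sub_of_coe_add_eq (hΩ w hw)) hl0 hl1
    rw [← EReal.coe_le_coe_iff, ← hQ]
    refine (iInf_le _ _).trans (hbound.trans_eq ?_)
    rw [dist_comm, dist_eq_norm, EReal.coe_eq_coe_iff]
    ring
  have hD : infDist x Ω ^ 2 ≤ δ ^ (2 * θ) / ζ ^ 2 := by
    rw [le_div_iff₀ (by positivity), mul_comm 2 θ, Real.rpow_mul hδ, Real.rpow_two, ← mul_pow]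
    exact pow_le_pow_left₀ (mul_nonneg infDist_nonneg hζ.le) (by linarith) 2
  calc Q ≤ -lam * δ + M / 2 * lam ^ 2 * infDist x Ω ^ 2 := hdist
    _ ≤ -lam * δ + M / 2 * lam ^ 2 * (δ ^ (2 * θ) / ζ ^ 2) := by gcongr
    _ = -lam * δ + M / (2 * ζ ^ 2) * lam ^ 2 * δ ^ (2 * θ) := by ring

end Model

theorem statement3_general
    {H : Type*} [NormedAddCommGroup H] [InnerProductSpace ℝ H] [CompleteSpace H]
    (f : H → ℝ) (f' : H → H) (Ψ : H → EReal) (Ω : Set H) (Fstar : ℝ)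
    (x : ℕ → H) (Hop : ℕ → H →L[ℝ] H) (p : ℕ → H) (α : ℕ → ℝ) (δ : ℕ → ℝ)
    (M m ζ ξ θ η γ : ℝ)
    -- f convex and differentiable with gradient f'
    (hf_conv : ConvexOn ℝ Set.univ f)
    (hf_diff : ∀ y : H, HasGradientAt f (f' y) y)
    -- Ψ convex, proper, lower semicontinuous
    (hΨ_conv : ConvexEReal Ψ)
    (hΨ_proper : ProperEReal Ψ)
    (hΨ_lsc : LowerSemicontinuous Ψ)
    -- F* attained on the nonempty solution set Ω
    (hΩ_ne : Ω.Nonempty)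
    (hΩ : ∀ y : H, y ∈ Ω ↔ objF f Ψ y = (Fstar : EReal))
    (hFstar_lb : ∀ y : H, (Fstar : EReal) ≤ objF f Ψ y)
    -- sharpness with parameters ζ > 0, ξ > 0, θ ∈ (1/2, 1]
    (hζ : 0 < ζ) (hθ : 1 / 2 < θ)
    (hsharp : ∀ y : H, ∀ d : ℝ, objF f Ψ y = ((Fstar + d : ℝ) : EReal) → d ≤ ξ →
      ζ * infDist y Ω ≤ d ^ θ)
    -- δ_t = F(x^t) − F*, with the initial point in the level set
    (hδ : ∀ t : ℕ, objF f Ψ (x t) = ((Fstar + δ t : ℝ) : EReal))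
    (hδ0 : δ 0 ≤ ξ)
    -- iterate update x^{t+1} = x^t + α_t p^t
    (hupdate : ∀ t : ℕ, x (t + 1) = x t + α t • p t)
    -- self-adjoint operators with M ⪰ H_t ⪰ m > 0
    (hm : 0 < m)
    (hH_lb : ∀ t : ℕ, ∀ u : H, m * ‖u‖ ^ 2 ≤ (inner ℝ u (Hop t u) : ℝ))
    (hH_ub : ∀ t : ℕ, ∀ u : H, (inner ℝ u (Hop t u) : ℝ) ≤ M * ‖u‖ ^ 2)
    -- multiplicative inexactness with parameter η ∈ [0,1)
    (hη1 : η < 1)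
    (hinexact : ∀ t : ℕ,
      modelQ f' Ψ (Hop t) (x t) (p t) - (⨅ q : H, modelQ f' Ψ (Hop t) (x t) q) ≤
        (η : EReal) * -(⨅ q : H, modelQ f' Ψ (Hop t) (x t) q))
    -- step sizes α_t ∈ (0,1] satisfying the Armijo condition with parameter γ ∈ (0,1)
    (hγ0 : 0 < γ)
    (hα : ∀ t : ℕ, 0 < α t ∧ α t ≤ 1)
    (harmijo : ∀ t : ℕ, objF f Ψ (x t + α t • p t) ≤
      objF f Ψ (x t) + ((γ * α t : ℝ) : EReal) * modelQ f' Ψ (Hop t) (x t) (p t)) :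
    -- (i) linear rate while δ_t is above the threshold
    (∀ t : ℕ, (ζ ^ 2 / M) ^ (1 / (2 * θ - 1)) < δ t →
      δ (t + 1) ≤ δ t * (1 - (1 - η) * α t * γ * ζ ^ 2 * ξ ^ (1 - 2 * θ) / (2 * M))) ∧
    -- (ii) after the threshold is first crossed, faster linear rate
    (∀ t₀ : ℕ, δ t₀ ≤ (ζ ^ 2 / M) ^ (1 / (2 * θ - 1)) →
      (∀ s : ℕ, s < t₀ → (ζ ^ 2 / M) ^ (1 / (2 * θ - 1)) < δ s) →
      ∀ t : ℕ, t₀ ≤ t → δ (t + 1) ≤ δ t * (1 - (1 - η) * α t * γ / 2)) := by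
  rcases subsingleton_or_nontrivial H with hH | hH
  · obtain ⟨w, hw⟩ := hΩ_ne
    have hδ_zero : ∀ t, δ t = 0 := fun t => by
      have h := (hδ t).symm.trans (Subsingleton.elim w (x t) ▸ (hΩ w).1 hw)
      rw [EReal.coe_eq_coe_iff] at h
      linarith
    simp [hδ_zero]
  have hM : 0 < M := by
    obtain ⟨u, hu⟩ := exists_ne (0 : H)
    have hu2 : 0 < ‖u‖ ^ 2 := by positivity
    exact pos_of_mul_pos_left ((mul_pos hm hu2).trans_le ((hH_lb 0 u).trans (hH_ub 0 u))) hu2.le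
  obtain ⟨L, b, hL⟩ := hΨ_conv.exists_affine_minorant hΨ_proper hΨ_lsc
  choose Q hQ hQ_nonpos using fun t =>
    exists_iInf_modelQ_eq_coe hm (hH_lb t) hL (EReal.eq_coe_sub_of_coe_add_eq (hδ t))
  have hκ : ∀ t, 0 ≤ (1 - η) * α t * γ := fun t => by
    have := (hα t).1
    positivity
  have hdesc : ∀ t, δ (t + 1) ≤ δ t + (1 - η) * α t * γ * Q t := fun t => by
    have h := objF_add_smul_le_of_inexact (hQ t) (hinexact t) (harmijo t)
      (mul_nonneg hγ0.le (hα t).1.le) (hδ t)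
    rw [← hupdate, hδ (t + 1), EReal.coe_le_coe_iff] at h
    linarith
  have hδ_nonneg : ∀ t, 0 ≤ δ t := fun t => by
    have h := hFstar_lb (x t)
    rw [hδ t, EReal.coe_le_coe_iff] at h
    linarith
  have hδ_anti : Antitone δ := antitone_nat_of_succ_le fun t =>
    (hdesc t).trans <|
      add_le_of_nonpos_right (mul_nonpos_of_nonneg_of_nonpos (hκ t) (hQ_nonpos t))
  have hδ_le : ∀ t, δ t ≤ ξ := fun t => (hδ_anti (Nat.zero_le t)).trans hδ0
  have hQ_le : ∀ t lam, 0 < lam → lam ≤ 1 →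
      Q t ≤ -lam * δ t + M / (2 * ζ ^ 2) * lam ^ 2 * δ t ^ (2 * θ) := fun t _ hl0 hl1 =>
    iInf_modelQ_le_of_sharp hf_conv (hf_diff _) hΨ_conv (hH_ub t) hM.le hζ hΩ_ne
      (fun w hw => (hΩ w).1 hw) (hδ t) (hδ_nonneg t) (hsharp _ _ (hδ t) (hδ_le t)) (hQ t)
      hl0.le hl1
  refine ⟨fun t ht => ?_, fun t₀ ht₀ _ t ht => ?_⟩
  · exact (le_mul_one_sub_of_le_add_mul (hκ t) (hdesc t)
      (le_neg_mul_of_threshold_lt hM hζ hθ (hδ_le t) ht (hQ_le t))).trans_eq (by ring)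
  · exact (le_mul_one_sub_of_le_add_mul (hκ t) (hdesc t)
      (le_neg_half_mul_of_le_threshold hM hζ hθ (hδ_nonneg t) ((hδ_anti ht).trans ht₀)
        (hQ_le t))).trans_eq (by ring)

/-- linear convergence of the objective gap δ_t = F(x^t) − F* for
sharpness exponent θ ∈ (1/2, 1]. -/
theorem statement3
    {H : Type*} [NormedAddCommGroup H] [InnerProductSpace ℝ H] [CompleteSpace H]
    (f : H → ℝ) (f' : H → H) (Ψ : H → EReal) (Ω : Set H) (Fstar : ℝ)
    (x : ℕ → H) (Hop : ℕ → H →L[ℝ] H) (p : ℕ → H) (α : ℕ → ℝ) (δ : ℕ → ℝ)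
    (M m ζ ξ θ η γ : ℝ)
    -- f convex and differentiable with gradient f'
    (hf_conv : ConvexOn ℝ Set.univ f)
    (hf_diff : ∀ y : H, HasGradientAt f (f' y) y)
    -- Ψ convex, proper, lower semicontinuous
    (hΨ_conv : ConvexEReal Ψ)
    (hΨ_proper : ProperEReal Ψ)
    (hΨ_lsc : LowerSemicontinuous Ψ)
    -- F* attained on the nonempty solution set Ω
    (hΩ_ne : Ω.Nonempty)
    (hΩ : ∀ y : H, y ∈ Ω ↔ objF f Ψ y = (Fstar : EReal))
    (hFstar_lb : ∀ y : H, (Fstar : EReal) ≤ objF f Ψ y)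
    -- sharpness with parameters ζ > 0, ξ > 0, θ ∈ (1/2, 1]
    (hζ : 0 < ζ) (hξ : 0 < ξ) (hθ : 1 / 2 < θ) (hθ1 : θ ≤ 1)
    (hsharp : ∀ y : H, ∀ d : ℝ, objF f Ψ y = ((Fstar + d : ℝ) : EReal) → d ≤ ξ →
      ζ * infDist y Ω ≤ d ^ θ)
    -- δ_t = F(x^t) − F*, with the initial point in the level set
    (hδ : ∀ t : ℕ, objF f Ψ (x t) = ((Fstar + δ t : ℝ) : EReal))
    (hδ0 : δ 0 ≤ ξ)
    -- iterate update x^{t+1} = x^t + α_t p^t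
    (hupdate : ∀ t : ℕ, x (t + 1) = x t + α t • p t)
    -- self-adjoint operators with M ⪰ H_t ⪰ m > 0
    (hm : 0 < m)
    (hH_sa : ∀ t : ℕ, ∀ u v : H, (inner ℝ (Hop t u) v : ℝ) = (inner ℝ u (Hop t v) : ℝ))
    (hH_lb : ∀ t : ℕ, ∀ u : H, m * ‖u‖ ^ 2 ≤ (inner ℝ u (Hop t u) : ℝ))
    (hH_ub : ∀ t : ℕ, ∀ u : H, (inner ℝ u (Hop t u) : ℝ) ≤ M * ‖u‖ ^ 2)
    -- multiplicative inexactness with parameter η ∈ [0,1)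
    (hη0 : 0 ≤ η) (hη1 : η < 1)
    (hinexact : ∀ t : ℕ,
      modelQ f' Ψ (Hop t) (x t) (p t) - (⨅ q : H, modelQ f' Ψ (Hop t) (x t) q) ≤
        (η : EReal) * -(⨅ q : H, modelQ f' Ψ (Hop t) (x t) q))
    -- step sizes α_t ∈ (0,1] satisfying the Armijo condition with parameter γ ∈ (0,1)
    (hγ0 : 0 < γ) (hγ1 : γ < 1)
    (hα : ∀ t : ℕ, 0 < α t ∧ α t ≤ 1)
    (harmijo : ∀ t : ℕ, objF f Ψ (x t + α t • p t) ≤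
      objF f Ψ (x t) + ((γ * α t : ℝ) : EReal) * modelQ f' Ψ (Hop t) (x t) (p t)) :
    -- (i) linear rate while δ_t is above the threshold
    (∀ t : ℕ, (ζ ^ 2 / M) ^ (1 / (2 * θ - 1)) < δ t →
      δ (t + 1) ≤ δ t * (1 - (1 - η) * α t * γ * ζ ^ 2 * ξ ^ (1 - 2 * θ) / (2 * M))) ∧
    -- (ii) after the threshold is first crossed, faster linear rate
    (∀ t₀ : ℕ, δ t₀ ≤ (ζ ^ 2 / M) ^ (1 / (2 * θ - 1)) →
      (∀ s : ℕ, s < t₀ → (ζ ^ 2 / M) ^ (1 / (2 * θ - 1)) < δ s) →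
      ∀ t : ℕ, t₀ ≤ t → δ (t + 1) ≤ δ t * (1 - (1 - η) * α t * γ / 2)) :=
  statement3_general f f' Ψ Ω Fstar x Hop p α δ M m ζ ξ θ η γ hf_conv hf_diff hΨ_conv hΨ_proper
    hΨ_lsc hΩ_ne hΩ hFstar_lb hζ hθ hsharp hδ hδ0 hupdate hm hH_lb hH_ub hη1 hinexact hγ0 hα harmijo
end

section
/- (Subgradient residual of F at the new point.) Let H be a real Hilbert space, f : H → ℝ differentiable with L-Lipschitz gradient, Ψ : H → ℝ ∪ {+∞} convex, proper and lower semicontinuous, and F = f + Ψ. Let A be a self-adjoint bounded linear operator with ‖A‖ ≤ M, and suppose x, p, r ∈ H satisfy r − ∇f(x) − A p ∈ ∂Ψ(x + p). Then the vector v := ∇f(x + p) + r − ∇f(x) − A p belongs to ∂F(x + p) = ∇f(x+p) + ∂Ψ(x+p), and ‖v‖ ≤ (L + M) ‖p‖ + ‖r‖; in particular dist(0, ∂F(x + p)) ≤ (L + M) ‖p‖ + ‖r‖. -/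
open Metric Filter

/-- The convex subdifferential of the extended-real-valued function `Ψ` at `x`. -/
def subdiffPsi {H : Type*} [NormedAddCommGroup H] [InnerProductSpace ℝ H]
    (Ψ : H → EReal) (x : H) : Set H :=
  {v | ∀ z : H, Ψ x + ((inner ℝ v (z - x) : ℝ) : EReal) ≤ Ψ z}

/-- The generalized gradient `∂F(x) = ∇f(x) + ∂Ψ(x)` of `F = f + Ψ`. -/
def subdiffF {H : Type*} [NormedAddCommGroup H] [InnerProductSpace ℝ H]
    (f' : H → H) (Ψ : H → EReal) (x : H) : Set H :=
  {w | ∃ v ∈ subdiffPsi Ψ x, w = f' x + v}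

/-! The vector is `∇f(x + p)` plus the subgradient `r − ∇f(x) − A p` of `Ψ` at `x + p`, and it
splits as `(∇f(x + p) − ∇f(x)) − A p + r`, whose three pieces are bounded by the Lipschitz
constant, the operator norm and `‖r‖` respectively. -/

theorem norm_add_sub_sub_apply_le {E F : Type*} [SeminormedAddCommGroup E] [NormedSpace ℝ E]
    [SeminormedAddCommGroup F] [NormedSpace ℝ F] {g : E → F} {A : E →L[ℝ] F} {L M : ℝ}
    (hg : ∀ a b : E, ‖g a - g b‖ ≤ L * ‖a - b‖) (hA : ‖A‖ ≤ M) (x p : E) (r : F) :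
    ‖g (x + p) + (r - g x - A p)‖ ≤ (L + M) * ‖p‖ + ‖r‖ := by
  have hg_step : ‖g (x + p) - g x‖ ≤ L * ‖p‖ := by simpa using hg (x + p) x
  calc ‖g (x + p) + (r - g x - A p)‖ = ‖(g (x + p) - g x) - A p + r‖ := by abel_nf
    _ ≤ ‖g (x + p) - g x‖ + ‖A p‖ + ‖r‖ := norm_add_le_of_le (norm_sub_le _ _) le_rfl
    _ ≤ L * ‖p‖ + M * ‖p‖ + ‖r‖ := by gcongr; exact A.le_of_opNorm_le hA p
    _ = (L + M) * ‖p‖ + ‖r‖ := by ring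

theorem Metric.infDist_zero_le_norm_of_mem {E : Type*} [SeminormedAddCommGroup E] {s : Set E}
    {w : E} (hw : w ∈ s) : infDist 0 s ≤ ‖w‖ := by
  simpa using infDist_le_dist_of_mem (x := 0) hw

theorem statement13_general
    {H : Type*} [NormedAddCommGroup H] [InnerProductSpace ℝ H]
    (f' : H → H) (Ψ : H → EReal) (A : H →L[ℝ] H)
    (L M : ℝ) (x p r : H)
    -- f differentiable with L-Lipschitz gradient f'
    (hLip : ∀ a b : H, ‖f' a - f' b‖ ≤ L * ‖a - b‖)
    -- A self-adjoint with ‖A‖ ≤ M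
    (hA_norm : ‖A‖ ≤ M)
    -- residual subgradient condition
    (hr : r - f' x - A p ∈ subdiffPsi Ψ (x + p)) :
    f' (x + p) + (r - f' x - A p) ∈ subdiffF f' Ψ (x + p) ∧
    ‖f' (x + p) + (r - f' x - A p)‖ ≤ (L + M) * ‖p‖ + ‖r‖ ∧
    infDist 0 (subdiffF f' Ψ (x + p)) ≤ (L + M) * ‖p‖ + ‖r‖ := by
  have hmem : f' (x + p) + (r - f' x - A p) ∈ subdiffF f' Ψ (x + p) := ⟨_, hr, rfl⟩
  have hnorm := norm_add_sub_sub_apply_le hLip hA_norm x p r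
  exact ⟨hmem, hnorm, (infDist_zero_le_norm_of_mem hmem).trans hnorm⟩

/-- if `r − ∇f(x) − A p ∈ ∂Ψ(x + p)`, then
`v = ∇f(x + p) + r − ∇f(x) − A p ∈ ∂F(x + p)` with `‖v‖ ≤ (L + M)‖p‖ + ‖r‖`; in
particular `dist(0, ∂F(x + p)) ≤ (L + M)‖p‖ + ‖r‖`. -/
theorem statement13
    {H : Type*} [NormedAddCommGroup H] [InnerProductSpace ℝ H] [CompleteSpace H]
    (f : H → ℝ) (f' : H → H) (Ψ : H → EReal) (A : H →L[ℝ] H)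
    (L M : ℝ) (x p r : H)
    -- f differentiable with L-Lipschitz gradient f'
    (hf_diff : ∀ y : H, HasGradientAt f (f' y) y)
    (hLip : ∀ a b : H, ‖f' a - f' b‖ ≤ L * ‖a - b‖)
    -- Ψ convex, proper, lower semicontinuous
    (hΨ_conv : ConvexEReal Ψ)
    (hΨ_proper : ProperEReal Ψ)
    (hΨ_lsc : LowerSemicontinuous Ψ)
    -- A self-adjoint with ‖A‖ ≤ M
    (hA_sa : ∀ u v : H, (inner ℝ (A u) v : ℝ) = (inner ℝ u (A v) : ℝ))
    (hA_norm : ‖A‖ ≤ M)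
    -- residual subgradient condition
    (hr : r - f' x - A p ∈ subdiffPsi Ψ (x + p)) :
    f' (x + p) + (r - f' x - A p) ∈ subdiffF f' Ψ (x + p) ∧
    ‖f' (x + p) + (r - f' x - A p)‖ ≤ (L + M) * ‖p‖ + ‖r‖ ∧
    infDist 0 (subdiffF f' Ψ (x + p)) ≤ (L + M) * ‖p‖ + ‖r‖ :=
  statement13_general f' Ψ A L M x p r hLip hA_norm hr
end

section
/- (Subgradient residual for proximal-type subproblem solvers.) Let H be a real Hilbert space, f : H → ℝ differentiable with L-Lipschitz gradient, Ψ : H → ℝ ∪ {+∞} convex, proper and lower semicontinuous, and F = f + Ψ. Let A be a self-adjoint bounded operator with ‖A‖ ≤ M, and Λ a self-adjoint positive-definite bounded operator with ‖Λ‖ ≤ M₁. Suppose x, p, y, s ∈ H are such that x + p is the minimizer over z ∈ H of (1/2)⟨w − z, Λ(w − z)⟩ + Ψ(z), where w = y − Λ^{-1}(∇f(x) + A(y − x) + s) (i.e., x + p = prox^Λ_Ψ(y − Λ^{-1}(∇f(x) + A(y−x) + s))). Then the vector v := ∇f(x + p) − Λ(x + p − y) − ∇f(x) − A(y − x) − s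 belongs to ∂F(x + p) = ∇f(x+p) + ∂Ψ(x+p), and ‖v‖ ≤ (L + M₁) ‖p‖ + (M + M₁) ‖y − x‖ + ‖s‖. -/
open Metric Filter

/-!
Comparing the prox point `u = x + p` with the points `u + t • (z - u)` and using convexity of `Ψ`
gives `t * (Ψ u - Ψ z + ⟪Λ (w - u), z - u⟫) ≤ O(t ^ 2)`; letting `t → 0` shows
`Λ (w - u) ∈ ∂Ψ(u)`. By the definition of `w` this subgradient is exactly `v - ∇f(x + p)`, and
the bound on `‖v‖` is the triangle inequality combined with the Lipschitz and operator-norm bounds.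
-/

open scoped Topology

theorem nonpos_of_forall_le_mul {X c : ℝ} (h : ∀ t : ℝ, 0 < t → t ≤ 1 → X ≤ t * c) : X ≤ 0 := by
  have hlim : Tendsto (fun t : ℝ => t * c) (𝓝[>] 0) (𝓝 0) :=
    ((continuous_mul_const c).tendsto' 0 0 (zero_mul c)).mono_left nhdsWithin_le_nhds
  refine ge_of_tendsto hlim ?_
  filter_upwards [Ioc_mem_nhdsGT zero_lt_one] with t ht using h t ht.1 ht.2

section Prox

variable {H : Type*} [NormedAddCommGroup H] [InnerProductSpace ℝ H]

theorem ConvexEReal.le_add_smul_sub {Ψ : H → EReal} (hΨ : ConvexEReal Ψ) {u z : H} {a b : ℝ}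
    (hu : Ψ u = a) (hz : Ψ z = b) {t : ℝ} (ht₀ : 0 ≤ t) (ht₁ : t ≤ 1) :
    Ψ (u + t • (z - u)) ≤ ((1 - t) * a + t * b : ℝ) := by
  have h := hΨ u z (1 - t) t (by linarith) ht₀ (by ring)
  rwa [hu, hz, ← EReal.coe_mul, ← EReal.coe_mul, ← EReal.coe_add,
    show (1 - t) • u + t • z = u + t • (z - u) by module] at h

theorem inner_sub_smul_apply_sub_smul {Λ : H →L[ℝ] H}
    (hΛ : ∀ u v : H, (inner ℝ (Λ u) v : ℝ) = (inner ℝ u (Λ v) : ℝ)) (e d : H) (t : ℝ) :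
    (inner ℝ (e - t • d) (Λ (e - t • d)) : ℝ) =
      inner ℝ e (Λ e) - 2 * t * inner ℝ d (Λ e) + t ^ 2 * inner ℝ d (Λ d) := by
  have hsym : (inner ℝ e (Λ d) : ℝ) = inner ℝ d (Λ e) := by rw [← hΛ e d, real_inner_comm]
  simp only [map_sub, map_smul, inner_sub_left, inner_sub_right, real_inner_smul_left,
    real_inner_smul_right, hsym]
  ring

/-- `u` is a minimizer defining `prox^Λ_Ψ(w)`. -/
def IsProxPoint (Ψ : H → EReal) (Λ : H →L[ℝ] H) (w u : H) : Prop :=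
  ∀ z : H, ((1 / 2 * (inner ℝ (w - u) (Λ (w - u)) : ℝ) : ℝ) : EReal) + Ψ u ≤
    ((1 / 2 * (inner ℝ (w - z) (Λ (w - z)) : ℝ) : ℝ) : EReal) + Ψ z

variable {Ψ : H → EReal} {Λ : H →L[ℝ] H} {w u : H}

theorem IsProxPoint.add_inner_le (hmin : IsProxPoint Ψ Λ w u) (hΨ : ConvexEReal Ψ)
    (hΛ : ∀ u v : H, (inner ℝ (Λ u) v : ℝ) = (inner ℝ u (Λ v) : ℝ))
    {z : H} {a b : ℝ} (hu : Ψ u = a) (hz : Ψ z = b) :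
    a + inner ℝ (Λ (w - u)) (z - u) ≤ b := by
  set d := z - u
  set e := w - u
  suffices h : ∀ t : ℝ, 0 < t → t ≤ 1 →
      a - b + inner ℝ d (Λ e) ≤ t * (inner ℝ d (Λ d) / 2) by
    have := nonpos_of_forall_le_mul h
    rw [real_inner_comm]
    linarith
  intro t ht₀ ht₁
  have hmin_t := (hmin (u + t • d)).trans
    (add_le_add_right (hΨ.le_add_smul_sub hu hz ht₀.le ht₁) _)
  rw [hu, sub_add_eq_sub_sub, ← EReal.coe_add, ← EReal.coe_add,
    EReal.coe_le_coe_iff, inner_sub_smul_apply_sub_smul hΛ] at hmin_t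
  nlinarith

theorem IsProxPoint.apply_sub_mem_subdiffPsi (hmin : IsProxPoint Ψ Λ w u) (hΨ : ConvexEReal Ψ)
    (hΛ : ∀ u v : H, (inner ℝ (Λ u) v : ℝ) = (inner ℝ u (Λ v) : ℝ)) :
    Λ (w - u) ∈ subdiffPsi Ψ u := by
  intro z
  induction hu : Ψ u using EReal.rec with
  | bot => rw [EReal.bot_add]; exact bot_le
  | top =>
    -- a minimizer with value `⊤` forces `Ψ ≡ ⊤`
    have h := hmin z
    rw [hu, EReal.add_top_of_ne_bot (EReal.coe_ne_bot _), top_le_iff] at h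
    have hz : Ψ z = ⊤ := by
      by_contra hz
      exact EReal.add_ne_top (EReal.coe_ne_top _) hz h
    rw [hz]
    exact le_top
  | coe a =>
    induction hz : Ψ z using EReal.rec with
    | bot =>
      have h := hmin z
      rw [hu, hz, EReal.add_bot, le_bot_iff, ← EReal.coe_add] at h
      exact absurd h (EReal.coe_ne_bot _)
    | top => exact le_top
    | coe b => exact_mod_cast hmin.add_inner_le hΨ hΛ hu hz

end Prox

theorem statement14_general
    {H : Type*} [NormedAddCommGroup H] [InnerProductSpace ℝ H]
    (f' : H → H) (Ψ : H → EReal) (A Λ : H →L[ℝ] H)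
    (L M M₁ : ℝ) (x p y s w : H)
    -- f differentiable with L-Lipschitz gradient f'
    (hLip : ∀ a b : H, ‖f' a - f' b‖ ≤ L * ‖a - b‖)
    -- Ψ convex, proper, lower semicontinuous
    (hΨ_conv : ConvexEReal Ψ)
    -- A self-adjoint with ‖A‖ ≤ M
    (hA_norm : ‖A‖ ≤ M)
    -- Λ self-adjoint positive definite with ‖Λ‖ ≤ M₁
    (hΛ_sa : ∀ u v : H, (inner ℝ (Λ u) v : ℝ) = (inner ℝ u (Λ v) : ℝ))
    (hΛ_norm : ‖Λ‖ ≤ M₁)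
    -- w = y − Λ⁻¹(∇f(x) + A(y − x) + s)
    (hw : Λ (y - w) = f' x + A (y - x) + s)
    -- x + p minimizes z ↦ (1/2)⟨w − z, Λ(w − z)⟩ + Ψ(z), i.e. x + p = prox^Λ_Ψ(w)
    (hprox : ∀ z : H,
      ((1 / 2 * (inner ℝ (w - (x + p)) (Λ (w - (x + p))) : ℝ) : ℝ) : EReal) + Ψ (x + p) ≤
      ((1 / 2 * (inner ℝ (w - z) (Λ (w - z)) : ℝ) : ℝ) : EReal) + Ψ z) :
    f' (x + p) - Λ (x + p - y) - f' x - A (y - x) - s ∈ subdiffF f' Ψ (x + p) ∧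
    ‖f' (x + p) - Λ (x + p - y) - f' x - A (y - x) - s‖ ≤
      (L + M₁) * ‖p‖ + (M + M₁) * ‖y - x‖ + ‖s‖ := by
  have hv : f' (x + p) - Λ (x + p - y) - f' x - A (y - x) - s =
      f' (x + p) + Λ (w - (x + p)) := by
    rw [show w - (x + p) = -(x + p - y) - (y - w) by abel, Λ.map_sub (-(x + p - y)) (y - w), map_neg, hw]
    abel
  refine ⟨⟨_, IsProxPoint.apply_sub_mem_subdiffPsi hprox hΨ_conv hΛ_sa, hv⟩, ?_⟩
  have hf : ‖f' (x + p) - f' x‖ ≤ L * ‖p‖ := by simpa using hLip (x + p) x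
  have hΛ : ‖Λ (x + p - y)‖ ≤ M₁ * (‖p‖ + ‖y - x‖) := by
    refine (Λ.le_of_opNorm_le hΛ_norm _).trans
      (mul_le_mul_of_nonneg_left ?_ ((norm_nonneg Λ).trans hΛ_norm))
    rw [show x + p - y = p - (y - x) by abel]
    exact norm_sub_le _ _
  have hA : ‖A (y - x)‖ ≤ M * ‖y - x‖ := A.le_of_opNorm_le hA_norm _
  calc ‖f' (x + p) - Λ (x + p - y) - f' x - A (y - x) - s‖
      = ‖(f' (x + p) - f' x) - Λ (x + p - y) - A (y - x) - s‖ := by congr 1; abel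
    _ ≤ ‖f' (x + p) - f' x‖ + ‖Λ (x + p - y)‖ + ‖A (y - x)‖ + ‖s‖ :=
        (norm_sub_le _ _).trans <| add_le_add_left
          ((norm_sub_le _ _).trans <| add_le_add_left (norm_sub_le _ _) _) _
    _ ≤ (L + M₁) * ‖p‖ + (M + M₁) * ‖y - x‖ + ‖s‖ := by linarith

/-- subgradient residual for proximal-type subproblem solvers: if
`x + p = prox^Λ_Ψ(w)` with `w = y − Λ⁻¹(∇f(x) + A(y − x) + s)` (equivalently
`Λ(y − w) = ∇f(x) + A(y − x) + s`), then
`v = ∇f(x + p) − Λ(x + p − y) − ∇f(x) − A(y − x) − s ∈ ∂F(x + p)` and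
`‖v‖ ≤ (L + M₁)‖p‖ + (M + M₁)‖y − x‖ + ‖s‖`. -/
theorem statement14
    {H : Type*} [NormedAddCommGroup H] [InnerProductSpace ℝ H] [CompleteSpace H]
    (f : H → ℝ) (f' : H → H) (Ψ : H → EReal) (A Λ : H →L[ℝ] H)
    (L M M₁ : ℝ) (x p y s w : H)
    -- f differentiable with L-Lipschitz gradient f'
    (hf_diff : ∀ z : H, HasGradientAt f (f' z) z)
    (hLip : ∀ a b : H, ‖f' a - f' b‖ ≤ L * ‖a - b‖)
    -- Ψ convex, proper, lower semicontinuous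
    (hΨ_conv : ConvexEReal Ψ)
    (hΨ_proper : ProperEReal Ψ)
    (hΨ_lsc : LowerSemicontinuous Ψ)
    -- A self-adjoint with ‖A‖ ≤ M
    (hA_sa : ∀ u v : H, (inner ℝ (A u) v : ℝ) = (inner ℝ u (A v) : ℝ))
    (hA_norm : ‖A‖ ≤ M)
    -- Λ self-adjoint positive definite with ‖Λ‖ ≤ M₁
    (hΛ_sa : ∀ u v : H, (inner ℝ (Λ u) v : ℝ) = (inner ℝ u (Λ v) : ℝ))
    (hΛ_pd : ∀ u : H, u ≠ 0 → (0 : ℝ) < (inner ℝ u (Λ u) : ℝ))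
    (hΛ_norm : ‖Λ‖ ≤ M₁)
    -- w = y − Λ⁻¹(∇f(x) + A(y − x) + s)
    (hw : Λ (y - w) = f' x + A (y - x) + s)
    -- x + p minimizes z ↦ (1/2)⟨w − z, Λ(w − z)⟩ + Ψ(z), i.e. x + p = prox^Λ_Ψ(w)
    (hprox : ∀ z : H,
      ((1 / 2 * (inner ℝ (w - (x + p)) (Λ (w - (x + p))) : ℝ) : ℝ) : EReal) + Ψ (x + p) ≤
      ((1 / 2 * (inner ℝ (w - z) (Λ (w - z)) : ℝ) : ℝ) : EReal) + Ψ z) :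
    f' (x + p) - Λ (x + p - y) - f' x - A (y - x) - s ∈ subdiffF f' Ψ (x + p) ∧
    ‖f' (x + p) - Λ (x + p - y) - f' x - A (y - x) - s‖ ≤
      (L + M₁) * ‖p‖ + (M + M₁) * ‖y - x‖ + ‖s‖ :=
  statement14_general f' Ψ A Λ L M M₁ x p y s w hLip hΨ_conv hA_norm hΛ_sa hΛ_norm hw hprox
end

section
/- (Step-size lower bound for backtracking line search.) Let H be a real Hilbert space, f : H → ℝ differentiable with L-Lipschitz gradient, Ψ : H → ℝ ∪ {+∞} convex, proper and lower semicontinuous, and F = f + Ψ. Let A be a self-adjoint operator with A ⪰ m·I for some m > 0, let γ ∈ (0,1), and let p satisfy Q_A(p; x) ≤ 0 and F(x) < ∞, Ψ(x + p) < ∞. Then the Armijo condition F(x + α p) ≤ F(x) + γ α Q_A(p; x) holds for every α ∈ (0, min{1, m/L}]. Consequently, the backtracking step size α = max{β^i : i ∈ ℕ ∪ {0}, β^i satisfies the Armijo condition} with β ∈ (0,1) satisfies α ≥ min{1, β m / L} > 0. -/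
/-!
The descent lemma and convexity of `Ψ` on the segment `[x, x + p]` give
`F(x + αp) - F(x) ≤ α Q_A(p; x) - (α/2) (⟨p, A p⟩ - L α ‖p‖²)` for `α ∈ [0, 1]`. Since `A ⪰ m I`
the bracket is nonnegative as soon as `α ≤ m / L`, and `Q_A(p; x) ≤ 0`, `γ ≤ 1` then yield the
Armijo condition. Backtracking thus never passes over a step `βⁱ ≤ min 1 (m / L)`, so the accepted
step `βʲ` is `1` or satisfies `βʲ⁻¹ > m / L`.
-/

open Metric Filter

section

variable {H : Type*} [NormedAddCommGroup H] [InnerProductSpace ℝ H]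

theorem image_add_le_of_lipschitz_gradient [CompleteSpace H] {f : H → ℝ} {f' : H → H} {L : ℝ}
    (hf : ∀ y, HasGradientAt f (f' y) y) (hLip : ∀ a b, ‖f' a - f' b‖ ≤ L * ‖a - b‖)
    (x d : H) : f (x + d) ≤ f x + inner ℝ (f' x) d + L / 2 * ‖d‖ ^ 2 := by
  have hφ : ∀ t : ℝ, HasDerivAt (fun t : ℝ => f (x + t • d)) (inner ℝ (f' (x + t • d)) d) t :=
    fun t => (hf _).hasFDerivAt.comp_hasDerivAt t
      (((hasDerivAt_id t).smul_const d).const_add x |>.congr_deriv (one_smul ℝ d))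
  have hbound : ∀ t : ℝ,
      HasDerivAt (fun t : ℝ => f x + t * inner ℝ (f' x) d + t ^ 2 * (L / 2 * ‖d‖ ^ 2))
        (inner ℝ (f' x) d + L * t * ‖d‖ ^ 2) t := fun t =>
    (((hasDerivAt_id' t).mul_const _).const_add (f x)).add ((hasDerivAt_pow 2 t).mul_const _)
      |>.congr_deriv (by push_cast; ring)
  have hslope : ∀ t ∈ Set.Ico (0 : ℝ) 1,
      inner ℝ (f' (x + t • d)) d ≤ inner ℝ (f' x) d + L * t * ‖d‖ ^ 2 := by
    rintro t ⟨ht, -⟩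
    have hgap : ‖f' (x + t • d) - f' x‖ ≤ L * t * ‖d‖ := by
      simpa [norm_smul, abs_of_nonneg ht, mul_assoc] using hLip (x + t • d) x
    calc inner ℝ (f' (x + t • d)) d
        = inner ℝ (f' x) d + inner ℝ (f' (x + t • d) - f' x) d := by rw [inner_sub_left]; ring
      _ ≤ inner ℝ (f' x) d + ‖f' (x + t • d) - f' x‖ * ‖d‖ := by
          gcongr; exact real_inner_le_norm _ _
      _ ≤ inner ℝ (f' x) d + L * t * ‖d‖ * ‖d‖ := by gcongr
      _ = inner ℝ (f' x) d + L * t * ‖d‖ ^ 2 := by ring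
  -- compare `t ↦ f (x + t • d)` on `[0, 1]` with the quadratic bound through their derivatives
  have := image_le_of_deriv_right_le_deriv_boundary
    (fun t _ => (hφ t).continuousAt.continuousWithinAt) (fun t _ => (hφ t).hasDerivWithinAt)
    (by simp) (fun t _ => (hbound t).continuousAt.continuousWithinAt)
    (fun t _ => (hbound t).hasDerivWithinAt) hslope (Set.right_mem_Icc.2 zero_le_one)
  simpa using this

theorem objF_eq_coe {Ψ : H → EReal} {f : H → ℝ} {y : H} {a : ℝ} (ha : Ψ y = a) :
    objF f Ψ y = ((f y + a : ℝ) : EReal) := by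
  rw [objF, ha, EReal.coe_add]

theorem modelQ_eq_coe {Ψ : H → EReal} {f' : H → H} {A : H →L[ℝ] H} {x p : H} {a b : ℝ}
    (ha : Ψ x = a) (hb : Ψ (x + p) = b) :
    modelQ f' Ψ A x p = ((inner ℝ (f' x) p + 1 / 2 * inner ℝ p (A p) + b - a : ℝ) : EReal) := by
  rw [modelQ, ha, hb]
  norm_cast

theorem ConvexEReal.apply_add_smul_le {Ψ : H → EReal} (hΨ : ConvexEReal Ψ) {x p : H} {a b α : ℝ}
    (ha : Ψ x = a) (hb : Ψ (x + p) = b) (hα0 : 0 ≤ α) (hα1 : α ≤ 1) :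
    Ψ (x + α • p) ≤ (((1 - α) * a + α * b : ℝ) : EReal) := by
  have h := hΨ x (x + p) (1 - α) α (by linarith) hα0 (by ring)
  rwa [show (1 - α) • x + α • (x + p) = x + α • p by module, ha, hb] at h

theorem objF_add_smul_le_armijo [CompleteSpace H] {f : H → ℝ} {f' : H → H} {Ψ : H → EReal}
    {A : H →L[ℝ] H} {L m γ α : ℝ} {x p : H}
    (hf : ∀ y, HasGradientAt f (f' y) y) (hLip : ∀ a b, ‖f' a - f' b‖ ≤ L * ‖a - b‖)
    (hL : 0 < L) (hΨ : ConvexEReal Ψ) (hΨ_bot : ∀ y, Ψ y ≠ ⊥)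
    (hA : ∀ u, m * ‖u‖ ^ 2 ≤ inner ℝ u (A u)) (hγ : γ ≤ 1)
    (hQ : modelQ f' Ψ A x p ≤ 0) (hFx : objF f Ψ x ≠ ⊤) (hΨxp : Ψ (x + p) ≠ ⊤)
    (hα0 : 0 ≤ α) (hα : α ≤ min 1 (m / L)) :
    objF f Ψ (x + α • p) ≤ objF f Ψ x + ((γ * α : ℝ) : EReal) * modelQ f' Ψ A x p := by
  have hΨx : Ψ x ≠ ⊤ := fun h => hFx (by rw [objF, h, EReal.coe_add_top])
  obtain ⟨a, ha⟩ : ∃ a : ℝ, Ψ x = a := ⟨_, (EReal.coe_toReal hΨx (hΨ_bot x)).symm⟩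
  obtain ⟨b, hb⟩ : ∃ b : ℝ, Ψ (x + p) = b := ⟨_, (EReal.coe_toReal hΨxp (hΨ_bot _)).symm⟩
  set q := inner ℝ (f' x) p + 1 / 2 * inner ℝ p (A p) + b - a
  have hq : q ≤ 0 := by rwa [modelQ_eq_coe ha hb, ← EReal.coe_zero, EReal.coe_le_coe_iff] at hQ
  have hα1 : α ≤ 1 := hα.trans (min_le_left _ _)
  have hαL : L * α ≤ m := by
    rw [mul_comm, ← le_div_iff₀ hL]; exact hα.trans (min_le_right _ _)
  -- the curvature of the model dominates the curvature `L` of `f` along steps of length `α`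
  have hcurv : L * α * ‖p‖ ^ 2 ≤ inner ℝ p (A p) :=
    (mul_le_mul_of_nonneg_right hαL (sq_nonneg _)).trans (hA p)
  have hdescent := image_add_le_of_lipschitz_gradient hf hLip x (α • p)
  rw [real_inner_smul_right, norm_smul, Real.norm_of_nonneg hα0] at hdescent
  have hdecrease : f (x + α • p) + ((1 - α) * a + α * b) ≤ f x + a + γ * α * q :=
    calc f (x + α • p) + ((1 - α) * a + α * b)
        ≤ f x + α * inner ℝ (f' x) p + L / 2 * (α * ‖p‖) ^ 2 + ((1 - α) * a + α * b) := by
          linarith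
      _ = f x + a + α * q - α / 2 * (inner ℝ p (A p) - L * α * ‖p‖ ^ 2) := by ring
      _ ≤ f x + a + α * q := sub_le_self _ (mul_nonneg (by linarith) (by linarith))
      _ ≤ f x + a + γ * α * q := by nlinarith [mul_nonneg hα0 (sub_nonneg.2 hγ)]
  calc objF f Ψ (x + α • p) = f (x + α • p) + Ψ (x + α • p) := rfl
    _ ≤ f (x + α • p) + (((1 - α) * a + α * b : ℝ) : EReal) :=
        add_le_add_right (hΨ.apply_add_smul_le ha hb hα0 hα1) _
    _ ≤ ((f x + a + γ * α * q : ℝ) : EReal) := by exact_mod_cast hdecrease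
    _ = objF f Ψ x + ((γ * α : ℝ) : EReal) * modelQ f' Ψ A x p := by
        rw [objF_eq_coe ha, modelQ_eq_coe ha hb]
        norm_cast

end

theorem min_one_mul_le_pow_of_maximal {P : ℝ → Prop} {c β : ℝ}
    (hP : ∀ α, 0 ≤ α → α ≤ min 1 c → P α) (hβ0 : 0 < β) (hβ1 : β < 1) {j : ℕ}
    (hmax : ∀ i, P (β ^ i) → β ^ i ≤ β ^ j) : min 1 (β * c) ≤ β ^ j := by
  -- otherwise `β ^ (j - 1)` already lies in `(0, min 1 c]` and is a longer admissible step
  by_contra! hlt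
  obtain _ | k := j
  · exact absurd hlt (by simp)
  · have hkc : β ^ k < c := by
      rw [pow_succ'] at hlt
      exact lt_of_mul_lt_mul_left (hlt.trans_le (min_le_right _ _)) hβ0.le
    have hk := hmax k (hP _ (by positivity) (le_min (pow_le_one₀ hβ0.le hβ1.le) hkc.le))
    exact (pow_lt_pow_right_of_lt_one₀ hβ0 hβ1 k.lt_succ_self).not_ge hk

theorem statement17_general
    {H : Type*} [NormedAddCommGroup H] [InnerProductSpace ℝ H] [CompleteSpace H]
    (f : H → ℝ) (f' : H → H) (Ψ : H → EReal) (A : H →L[ℝ] H)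
    (L m γ : ℝ) (x p : H)
    -- f differentiable with L-Lipschitz gradient f', L > 0
    (hf_diff : ∀ y : H, HasGradientAt f (f' y) y)
    (hL : 0 < L)
    (hLip : ∀ a b : H, ‖f' a - f' b‖ ≤ L * ‖a - b‖)
    -- Ψ convex, proper, lower semicontinuous
    (hΨ_conv : ConvexEReal Ψ)
    (hΨ_proper : ProperEReal Ψ)
    -- A self-adjoint with A ⪰ m I, m > 0
    (hA_lb : ∀ u : H, m * ‖u‖ ^ 2 ≤ (inner ℝ u (A u) : ℝ))
    -- γ ∈ (0,1)
    (hγ1 : γ < 1)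
    -- p with Q_A(p; x) ≤ 0, and finiteness F(x) < ∞, Ψ(x + p) < ∞
    (hQp : modelQ f' Ψ A x p ≤ (0 : EReal))
    (hFx : objF f Ψ x ≠ ⊤)
    (hΨxp : Ψ (x + p) ≠ ⊤) :
    -- the Armijo condition holds for every α ∈ (0, min{1, m/L}]
    (∀ α : ℝ, 0 < α → α ≤ min 1 (m / L) →
      objF f Ψ (x + α • p) ≤ objF f Ψ x + ((γ * α : ℝ) : EReal) * modelQ f' Ψ A x p) ∧
    -- hence the backtracking step size is at least min{1, β m / L} > 0
    (∀ β : ℝ, 0 < β → β < 1 → ∀ j : ℕ,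
      (objF f Ψ (x + β ^ j • p) ≤
        objF f Ψ x + ((γ * β ^ j : ℝ) : EReal) * modelQ f' Ψ A x p) →
      (∀ i : ℕ,
        (objF f Ψ (x + β ^ i • p) ≤
          objF f Ψ x + ((γ * β ^ i : ℝ) : EReal) * modelQ f' Ψ A x p) → β ^ i ≤ β ^ j) →
      min 1 (β * m / L) ≤ β ^ j) := by
  have armijo : ∀ α : ℝ, 0 ≤ α → α ≤ min 1 (m / L) →
      objF f Ψ (x + α • p) ≤ objF f Ψ x + ((γ * α : ℝ) : EReal) * modelQ f' Ψ A x p :=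
    fun _ hα0 hα => objF_add_smul_le_armijo hf_diff hLip hL hΨ_conv hΨ_proper.1 hA_lb hγ1.le
      hQp hFx hΨxp hα0 hα
  refine ⟨fun α hα0 => armijo α hα0.le, fun β hβ0 hβ1 j _ hmax => ?_⟩
  rw [mul_div_assoc]
  exact min_one_mul_le_pow_of_maximal armijo hβ0 hβ1 hmax

/-- step-size lower bound for backtracking line search: if `A ⪰ m I`,
`Q_A(p; x) ≤ 0`, `F(x) < ∞` and `Ψ(x + p) < ∞`, then the Armijo condition holds for
every `α ∈ (0, min{1, m/L}]`; consequently the backtracking step size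
`α = max{βⁱ : βⁱ satisfies Armijo}` satisfies `α ≥ min{1, β m / L}`. -/
theorem statement17
    {H : Type*} [NormedAddCommGroup H] [InnerProductSpace ℝ H] [CompleteSpace H]
    (f : H → ℝ) (f' : H → H) (Ψ : H → EReal) (A : H →L[ℝ] H)
    (L m γ : ℝ) (x p : H)
    -- f differentiable with L-Lipschitz gradient f', L > 0
    (hf_diff : ∀ y : H, HasGradientAt f (f' y) y)
    (hL : 0 < L)
    (hLip : ∀ a b : H, ‖f' a - f' b‖ ≤ L * ‖a - b‖)
    -- Ψ convex, proper, lower semicontinuous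
    (hΨ_conv : ConvexEReal Ψ)
    (hΨ_proper : ProperEReal Ψ)
    (hΨ_lsc : LowerSemicontinuous Ψ)
    -- A self-adjoint with A ⪰ m I, m > 0
    (hm : 0 < m)
    (hA_sa : ∀ u v : H, (inner ℝ (A u) v : ℝ) = (inner ℝ u (A v) : ℝ))
    (hA_lb : ∀ u : H, m * ‖u‖ ^ 2 ≤ (inner ℝ u (A u) : ℝ))
    -- γ ∈ (0,1)
    (hγ0 : 0 < γ) (hγ1 : γ < 1)
    -- p with Q_A(p; x) ≤ 0, and finiteness F(x) < ∞, Ψ(x + p) < ∞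
    (hQp : modelQ f' Ψ A x p ≤ (0 : EReal))
    (hFx : objF f Ψ x ≠ ⊤)
    (hΨxp : Ψ (x + p) ≠ ⊤) :
    -- the Armijo condition holds for every α ∈ (0, min{1, m/L}]
    (∀ α : ℝ, 0 < α → α ≤ min 1 (m / L) →
      objF f Ψ (x + α • p) ≤ objF f Ψ x + ((γ * α : ℝ) : EReal) * modelQ f' Ψ A x p) ∧
    -- hence the backtracking step size is at least min{1, β m / L} > 0
    (∀ β : ℝ, 0 < β → β < 1 → ∀ j : ℕ,
      (objF f Ψ (x + β ^ j • p) ≤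
        objF f Ψ x + ((γ * β ^ j : ℝ) : EReal) * modelQ f' Ψ A x p) →
      (∀ i : ℕ,
        (objF f Ψ (x + β ^ i • p) ≤
          objF f Ψ x + ((γ * β ^ i : ℝ) : EReal) * modelQ f' Ψ A x p) → β ^ i ≤ β ^ j) →
      min 1 (β * m / L) ≤ β ^ j) :=
  statement17_general f f' Ψ A L m γ x p hf_diff hL hLip hΨ_conv hΨ_proper hA_lb hγ1 hQp hFx hΨxp
end
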